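/- arXiv:2605.06956 — 4 statements merged into one kernel-verified Lean document; each statement's English description precedes it below -/
import Mathlib

section
/- Let F = y^m z^{n-m} - x^n with n > m > 1 and char(k) ∤ n·m·(n-m), k algebraically closed. Then the total Tjurina number τ(F) = (n-1)(n-2). -/
open MvPolynomial

/-- The multiplicative set of polynomials in `k[u,v]` not vanishing at `(a,b)`; the complement
of the maximal ideal `⟨u-a, v-b⟩`. -/
def ptCompl {k : Type} [Field k] (a b : k) : Submonoid (MvPolynomial (Fin 2) k) where
  carrier := {g | eval ![a, b] g ≠ 0}
  mul_mem' := by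
    intro g h hg hh
    simp only [Set.mem_setOf_eq, map_mul] at *
    exact mul_ne_zero hg hh
  one_mem' := by simp

/-- `dim_k (k[u,v]/J)_{⟨u-a, v-b⟩}`. -/
noncomputable def localDim {k : Type} [Field k] (J : Ideal (MvPolynomial (Fin 2) k)) (a b : k) : ℕ :=
  Module.finrank k
    (Localization (ptCompl a b) ⧸ J.map (algebraMap (MvPolynomial (Fin 2) k) (Localization (ptCompl a b))))

/-- The Tjurina ideal `⟨g, g_{X0}, g_{X1}⟩` of an affine plane curve `g ∈ k[u,v]`. -/
noncomputable def tjurinaIdeal {k : Type} [Field k] (g : MvPolynomial (Fin 2) k) :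
    Ideal (MvPolynomial (Fin 2) k) :=
  Ideal.span {g, pderiv 0 g, pderiv 1 g}

/-!
In each chart the singularity is `y^q - x^p` with `p, q` invertible in `k`, so its Tjurina ideal
is the monomial ideal `(x^{p-1}, y^{q-1})`. Its radical is the maximal ideal of the origin, so
every polynomial not vanishing at the origin is already a unit modulo it and localizing changes
nothing; the quotient has the monomial basis `x^i y^j`, `i < p - 1`, `j < q - 1`. The two charts give `(n-1)(m-1) + (n-1)(n-m-1) = (n-1)(n-2)`.
-/

theorem finrank_localization_quotient {k R : Type*} [Field k] [CommRing R] [Algebra k R]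
    (M : Submonoid R) (J : Ideal R)
    (hM : ∀ s ∈ M, IsUnit (Ideal.Quotient.mk J s)) :
    Module.finrank k (Localization M ⧸ J.map (algebraMap R (Localization M))) =
      Module.finrank k (R ⧸ J) := by
  have hunits : Algebra.algebraMapSubmonoid (R ⧸ J) M ≤ IsUnit.submonoid (R ⧸ J) := by
    rintro _ ⟨s, hs, rfl⟩
    exact hM s hs
  have e := IsLocalization.atUnits (R ⧸ J) _
    (S := Localization M ⧸ J.map (algebraMap R (Localization M))) hunits
  exact ((e.restrictScalars R).restrictScalars k).toLinearEquiv.finrank_eq.symm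

theorem Finsupp.natCard_setOf_forall_apply_lt {σ : Type*} [Fintype σ] (a : σ → ℕ) :
    Nat.card {d : σ →₀ ℕ | ∀ i, d i < a i} = ∏ i, a i := by
  let e : {d : σ →₀ ℕ | ∀ i, d i < a i} ≃ ∀ i, Fin (a i) :=
    (Finsupp.equivFunOnFinite.subtypeEquiv fun _ => Iff.rfl).trans
      (Equiv.subtypePiEquivPi.trans (Equiv.piCongrRight fun i => Fin.equivSubtype.symm))
  rw [Nat.card_congr e, Nat.card_pi]
  simp

namespace MvPolynomial

section CommRing

variable {σ R : Type*} [CommRing R]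

theorem isCompl_restrictSupport_compl (s : Set (σ →₀ ℕ)) :
    IsCompl (restrictSupport R s) (restrictSupport R sᶜ) := by
  simp only [restrictSupport, AddMonoidAlgebra.supported_eq_map]
  exact (Submodule.orderIsoMapComap (AddMonoidAlgebra.coeffLinearEquiv R).symm).isCompl
    ⟨Finsupp.disjoint_supported_supported isCompl_compl.disjoint,
      Finsupp.codisjoint_supported_supported isCompl_compl.codisjoint⟩

theorem restrictScalars_span_X_pow (a : σ → ℕ) :
    (Ideal.span (Set.range fun i => (X i : MvPolynomial σ R) ^ a i)).restrictScalars R =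
      restrictSupport R {d | ∃ i, a i ≤ d i} := by
  have hrange : (Set.range fun i => (X i : MvPolynomial σ R) ^ a i) =
      (fun d => monomial d 1) '' Set.range fun i => Finsupp.single i (a i) := by
    rw [← Set.range_comp]
    simp only [Function.comp_def, X_pow_eq_monomial]
  ext x
  simp [hrange, mem_ideal_span_monomial_image, mem_restrictSupport_iff, Set.subset_def]

theorem sub_C_constantCoeff_mem_span_X (p : MvPolynomial σ R) :
    p - C (constantCoeff p) ∈ Ideal.span (Set.range X) := by
  rw [← Set.image_univ, mem_ideal_span_X_image]
  intro m hm
  have hm0 : m ≠ 0 := by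
    rintro rfl
    simp [constantCoeff_eq] at hm
  obtain ⟨i, hi⟩ := Finsupp.ne_iff.1 hm0
  exact ⟨i, trivial, hi⟩

theorem isUnit_mk_of_X_mem_radical {J : Ideal (MvPolynomial σ R)} (hJ : ∀ i, X i ∈ J.radical)
    {s : MvPolynomial σ R} (hs : IsUnit (constantCoeff s)) :
    IsUnit (Ideal.Quotient.mk J s) := by
  obtain ⟨n, hn⟩ : s - C (constantCoeff s) ∈ J.radical :=
    Ideal.span_le.2 (Set.range_subset_iff.2 hJ) (sub_C_constantCoeff_mem_span_X s)
  have hnil : IsNilpotent (Ideal.Quotient.mk J (s - C (constantCoeff s))) :=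
    ⟨n, by rw [← map_pow, Ideal.Quotient.eq_zero_iff_mem]; exact hn⟩
  rw [← add_sub_cancel (C (constantCoeff s)) s, map_add]
  exact hnil.isUnit_add_left_of_commute ((hs.map C).map (Ideal.Quotient.mk J)) (Commute.all _ _)

end CommRing

variable {σ k : Type*} [Field k]

theorem finrank_quotient_span_X_pow [Fintype σ] (a : σ → ℕ) :
    Module.finrank k
        (MvPolynomial σ k ⧸ Ideal.span (Set.range fun i => (X i : MvPolynomial σ k) ^ a i)) =
      ∏ i, a i := by
  set J := Ideal.span (Set.range fun i => (X i : MvPolynomial σ k) ^ a i)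
  have hbox : {d : σ →₀ ℕ | ∃ i, a i ≤ d i}ᶜ = {d | ∀ i, d i < a i} := by
    ext d
    simp
  have e : (MvPolynomial σ k ⧸ J) ≃ₗ[k] restrictSupport k {d : σ →₀ ℕ | ∀ i, d i < a i} :=
    (Submodule.Quotient.restrictScalarsEquiv k J).symm ≪≫ₗ
      Submodule.quotientEquivOfIsCompl _ _ (by
        rw [restrictScalars_span_X_pow, ← hbox]
        exact isCompl_restrictSupport_compl _)
  rw [e.finrank_eq, Module.finrank_eq_nat_card_basis (basisRestrictSupport k _),
    Finsupp.natCard_setOf_forall_apply_lt]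

end MvPolynomial

section PlaneCurve

variable {k : Type} [Field k]

theorem localDim_span_X_pow (a : Fin 2 → ℕ) :
    localDim (Ideal.span (Set.range fun i => (X i : MvPolynomial (Fin 2) k) ^ a i)) 0 0 =
      a 0 * a 1 := by
  rw [localDim, finrank_localization_quotient, finrank_quotient_span_X_pow, Fin.prod_univ_two]
  intro s hs
  refine isUnit_mk_of_X_mem_radical (fun i => ?_) (Ne.isUnit ?_)
  · exact ⟨a i, Ideal.subset_span ⟨i, rfl⟩⟩
  · have hzero : ![(0 : k), 0] = 0 := by
      ext i
      fin_cases i <;> rfl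
    simpa [ptCompl, hzero] using hs

theorem tjurinaIdeal_X_pow_sub_X_pow {p q : ℕ} (hp : (p : k) ≠ 0) (hq : (q : k) ≠ 0) :
    tjurinaIdeal ((X 1 : MvPolynomial (Fin 2) k) ^ q - X 0 ^ p) =
      Ideal.span (Set.range fun i => X i ^ ![p - 1, q - 1] i) := by
  obtain _ | p := p
  · simp at hp
  obtain _ | q := q
  · simp at hq
  have h0 : pderiv 0 ((X 1 : MvPolynomial (Fin 2) k) ^ (q + 1) - X 0 ^ (p + 1)) =
      -(C ((p + 1 : ℕ) : k) * X 0 ^ p) := by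
    simp
  have h1 : pderiv 1 ((X 1 : MvPolynomial (Fin 2) k) ^ (q + 1) - X 0 ^ (p + 1)) =
      C ((q + 1 : ℕ) : k) * X 1 ^ q := by
    simp
  have hg : (X 1 : MvPolynomial (Fin 2) k) ^ (q + 1) - X 0 ^ (p + 1) ∈
      Ideal.span {X 0 ^ p} ⊔ Ideal.span {X 1 ^ q} := by
    rw [← Ideal.span_insert]
    exact Ideal.mem_span_pair.2 ⟨-X 0, X 1, by ring⟩
  have hrange : (Set.range fun i => (X i : MvPolynomial (Fin 2) k) ^ ![p, q] i) =
      {X 0 ^ p, X 1 ^ q} := by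
    ext
    simp [Fin.exists_fin_two, eq_comm]
  rw [tjurinaIdeal, h0, h1, Ideal.span_insert, Ideal.span_insert, Ideal.span_singleton_neg,
    Ideal.span_singleton_mul_left_unit (hp.isUnit.map C),
    Ideal.span_singleton_mul_left_unit (hq.isUnit.map C),
    Nat.add_sub_cancel, Nat.add_sub_cancel, hrange, Ideal.span_insert]
  exact sup_eq_right.2 ((Ideal.span_singleton_le_iff_mem _).2 hg)

end PlaneCurve

theorem statement_10_general {k : Type} [Field k] (n m : ℕ)
    (hm : 1 < m) (hmn : m < n)
    (hn0 : (n : k) ≠ 0) (hm0 : (m : k) ≠ 0) (hnm0 : ((n - m : ℕ) : k) ≠ 0) :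
    localDim (tjurinaIdeal ((X 1 : MvPolynomial (Fin 2) k) ^ m - X 0 ^ n)) 0 0 +
      localDim (tjurinaIdeal ((X 1 : MvPolynomial (Fin 2) k) ^ (n - m) - X 0 ^ n)) 0 0 =
      (n - 1) * (n - 2) := by
  rw [tjurinaIdeal_X_pow_sub_X_pow hn0 hm0, tjurinaIdeal_X_pow_sub_X_pow hn0 hnm0,
    localDim_span_X_pow, localDim_span_X_pow]
  simp only [Matrix.cons_val_zero, Matrix.cons_val_one, ← mul_add]
  congr 1
  omega

/-- Let `F = yᵐ z^{n-m} - xⁿ` with `n > m > 1`, over an algebraically closed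
field `k` with `char k ∤ n·m·(n-m)`.  The singular points of `F` are `(0:0:1)` (in the chart
`z = 1`, where the dehomogenization is `g = yᵐ - xⁿ`) and, when `n - m > 1`, `(0:1:0)` (in the
chart `y = 1`, where the dehomogenization is `f = z^{n-m} - xⁿ`); the total Tjurina number is
the sum of the local Tjurina numbers at these points, and
`τ(F) = (n-1)(m-1) + (n-1)(n-m-1) = (n-1)(n-2)`. -/
theorem statement_10 {k : Type} [Field k] [IsAlgClosed k] (n m : ℕ)
    (hm : 1 < m) (hmn : m < n)
    (hn0 : (n : k) ≠ 0) (hm0 : (m : k) ≠ 0) (hnm0 : ((n - m : ℕ) : k) ≠ 0) :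
    localDim (tjurinaIdeal ((X 1 : MvPolynomial (Fin 2) k) ^ m - X 0 ^ n)) 0 0 +
      localDim (tjurinaIdeal ((X 1 : MvPolynomial (Fin 2) k) ^ (n - m) - X 0 ^ n)) 0 0 =
      (n - 1) * (n - 2) :=
  statement_10_general n m hm hmn hn0 hm0 hnm0
end

section
/- Let I = ⟨2z², yz, 2xz + 3y²⟩ ⊆ k[x,y,z] with char(k) ≠ 2, 3. Then the projective zero set V(I) = {(1:0:0)}, and dim_k (k[y,z]/⟨z², yz, 2z + 3y²⟩)_{⟨y,z⟩} = 3. Consequently deg(R/I) = 3. -/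
open MvPolynomial

/-- The degree-`n` homogeneous component of `k[x,y,z]/I`. -/
noncomputable def gradedPiece {k : Type} [Field k] (I : Ideal (MvPolynomial (Fin 3) k)) (n : ℕ) :
    Submodule k (MvPolynomial (Fin 3) k ⧸ I) :=
  (homogeneousSubmodule (Fin 3) k n).map (Ideal.Quotient.mkₐ k I).toLinearMap

/-!
Modulo the ideal, `z² = yz = 0`, hence `y³ = 0`, and `xz = -3/2 · y²`. So every monomial of
degree `n ≥ 2` is a multiple of `xⁿ`, `xⁿ⁻¹y` or `xⁿ⁻²y²`, and likewise (with `x = 1`) the chart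
quotient is spanned by `1, y, y²`. Sending `x ↦ 1`, `y ↦ t`, `z ↦ -3/2 · t²` into `k[t]/(t³)`
maps these three elements to `1, t, t²`, so they are independent. The chart quotient is already
local at the origin: `y` and `z` are nilpotent in it, so every polynomial not vanishing at `0`
becomes a unit and localizing changes nothing.
-/

theorem MvPolynomial.homogeneousSubmodule_eq_span_monomial {σ R : Type*} [CommSemiring R]
    (n : ℕ) :
    homogeneousSubmodule σ R n =
      Submodule.span R ((fun d => monomial d 1) '' {d | d.degree = n}) := by
  simp [homogeneousSubmodule_eq_finsupp_supported, AddMonoidAlgebra.supported_eq_span_single,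
    single_eq_monomial]

theorem MvPolynomial.isNilpotent_sub_C_constantCoeff {σ R A : Type*} [CommRing R] [CommRing A]
    (f : MvPolynomial σ R →+* A) (hX : ∀ i, IsNilpotent (f (X i))) (p : MvPolynomial σ R) :
    IsNilpotent (f p - f (C (constantCoeff p))) := by
  induction p using MvPolynomial.induction_on with
  | C a => simp
  | add p q hp hq =>
    simpa [add_sub_add_comm] using (Commute.all _ _).isNilpotent_add hp hq
  | mul_X p i _ =>
    simpa using (Commute.all _ _).isNilpotent_mul_left (hX i)

theorem MvPolynomial.isUnit_map_of_isUnit_constantCoeff {σ R A : Type*} [CommRing R]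
    [CommRing A] (f : MvPolynomial σ R →+* A) (hX : ∀ i, IsNilpotent (f (X i)))
    {p : MvPolynomial σ R} (hp : IsUnit (constantCoeff p)) : IsUnit (f p) := by
  simpa using (isNilpotent_sub_C_constantCoeff f hX p).isUnit_add_right_of_commute
    ((hp.map C).map f) (Commute.all _ _)

theorem localDim_eq_finrank_quotient {k : Type} [Field k] (J : Ideal (MvPolynomial (Fin 2) k))
    (a b : k) (h : ∀ s, eval ![a, b] s ≠ 0 → IsUnit (Ideal.Quotient.mk J s)) :
    localDim J a b = Module.finrank k (MvPolynomial (Fin 2) k ⧸ J) := by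
  let L := Localization (ptCompl a b)
  have hunits : Algebra.algebraMapSubmonoid (MvPolynomial (Fin 2) k ⧸ J) (ptCompl a b)
      ≤ IsUnit.submonoid _ := by
    rintro _ ⟨s, hs, rfl⟩
    exact h s hs
  have : IsScalarTower k (MvPolynomial (Fin 2) k ⧸ J) (L ⧸ J.map (algebraMap _ L)) :=
    IsScalarTower.of_algebraMap_eq (S := MvPolynomial (Fin 2) k ⧸ J) fun _ => rfl
  exact ((IsLocalization.atUnits _ _ (S := L ⧸ J.map (algebraMap _ L)) hunits).restrictScalars
    k).toLinearEquiv.finrank_eq.symm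

section TruncatedPolynomial

variable {k : Type} [Field k] (m : ℕ)

theorem AdjoinRoot.root_X_pow_pow_self :
    AdjoinRoot.root (Polynomial.X ^ m : Polynomial k) ^ m = 0 := by
  rw [← AdjoinRoot.mk_X, ← map_pow, AdjoinRoot.mk_self]

theorem AdjoinRoot.linearIndependent_root_X_pow_pow :
    LinearIndependent k
      fun i : Fin m => AdjoinRoot.root (Polynomial.X ^ m : Polynomial k) ^ (i : ℕ) := by
  let pb := AdjoinRoot.powerBasis' (Polynomial.monic_X_pow (R := k) m)
  have hdim : pb.dim = m := by simp [pb]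
  have hpow : pb.basis ∘ finCongr hdim.symm =
      fun i : Fin m => AdjoinRoot.root (Polynomial.X ^ m : Polynomial k) ^ (i : ℕ) := by
    ext i
    simp [pb]
  have h := pb.basis.linearIndependent.comp _ (finCongr hdim.symm).injective
  rwa [hpow] at h

theorem finrank_span_pow_mul_pow {Q : Type*} [CommRing Q] [Algebra k Q]
    (F : Q →ₐ[k] AdjoinRoot (Polynomial.X ^ m : Polynomial k)) {x y : Q} (hx : F x = 1)
    (hy : F y = AdjoinRoot.root _) (n : ℕ) :
    Module.finrank k
      (Submodule.span k (Set.range fun i : Fin m => x ^ (n - i) * y ^ (i : ℕ))) = m := by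
  rw [finrank_span_eq_card, Fintype.card_fin]
  apply LinearIndependent.of_comp F.toLinearMap
  have himage : F.toLinearMap ∘ (fun i : Fin m => x ^ (n - i) * y ^ (i : ℕ)) =
      fun i : Fin m => AdjoinRoot.root (Polynomial.X ^ m : Polynomial k) ^ (i : ℕ) := by
    ext i
    simp [hx, hy]
  rw [himage]
  exact AdjoinRoot.linearIndependent_root_X_pow_pow m

end TruncatedPolynomial

section NodalRelations

variable {k : Type} [Field k] {Q : Type*} [CommRing Q] [Algebra k Q] {x y z : Q}

theorem pow_three_eq_zero_of_nodal (h3 : (3 : k) ≠ 0) (hyz : y * z = 0)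
    (hrel : 2 * x * z + 3 * y ^ 2 = 0) : y ^ 3 = 0 := by
  have h : (3 : k) • y ^ 3 = 0 := by
    rw [Algebra.smul_def, map_ofNat]
    linear_combination y * hrel - 2 * x * hyz
  exact (smul_eq_zero.mp h).resolve_left h3

theorem mul_eq_smul_sq_of_nodal (h2 : (2 : k) ≠ 0) (hrel : 2 * x * z + 3 * y ^ 2 = 0) :
    x * z = (-3 / 2 : k) • y ^ 2 := by
  have h : (2 : k) • (x * z - (-3 / 2 : k) • y ^ 2) = 0 := by
    rw [smul_sub, smul_smul, show (2 : k) * (-3 / 2) = -3 by field_simp, Algebra.smul_def,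
      Algebra.smul_def, map_neg, map_ofNat, map_ofNat]
    linear_combination hrel
  exact sub_eq_zero.mp ((smul_eq_zero.mp h).resolve_left h2)

theorem pow_mul_pow_mul_pow_mem_span (h2 : (2 : k) ≠ 0) (h3 : (3 : k) ≠ 0) (hz : z ^ 2 = 0)
    (hyz : y * z = 0) (hrel : 2 * x * z + 3 * y ^ 2 = 0) {a b e n : ℕ} (habe : a + b + e = n)
    (hn : 2 ≤ n) :
    x ^ a * y ^ b * z ^ e ∈
      Submodule.span k (Set.range fun i : Fin 3 => x ^ (n - i) * y ^ (i : ℕ)) := by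
  have hmem (i : Fin 3) : x ^ (n - i) * y ^ (i : ℕ) ∈
      Submodule.span k (Set.range fun i : Fin 3 => x ^ (n - i) * y ^ (i : ℕ)) :=
    Submodule.subset_span ⟨i, rfl⟩
  rcases (show e = 0 ∨ e = 1 ∨ 2 ≤ e by omega) with rfl | rfl | he
  · rcases (show b ≤ 2 ∨ 3 ≤ b by omega) with hb | hb
    · simpa [show a = n - b by omega] using hmem ⟨b, by omega⟩
    · simp [pow_eq_zero_of_le hb (pow_three_eq_zero_of_nodal h3 hyz hrel)]
  · rcases b with _ | b
    · obtain ⟨a, rfl⟩ : ∃ a', a = a' + 1 := ⟨a - 1, by omega⟩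
      have hxz : x ^ (a + 1) * y ^ 0 * z ^ 1 = (-3 / 2 : k) • (x ^ (n - 2) * y ^ 2) := by
        rw [show n - 2 = a by omega, ← mul_smul_comm, ← mul_eq_smul_sq_of_nodal h2 hrel]
        ring
      exact hxz ▸ Submodule.smul_mem _ _ (hmem 2)
    · have hzero : x ^ a * y ^ (b + 1) * z = 0 := by
        linear_combination x ^ a * y ^ b * hyz
      rw [pow_one, hzero]
      exact zero_mem _
  · simp [pow_eq_zero_of_le he hz]

end NodalRelations

theorem nodal_relations_of_pow_three_eq_zero {k : Type} [Field k] {B : Type*} [CommRing B]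
    [Algebra k B] {r : B} (h2 : (2 : k) ≠ 0) (hr : r ^ 3 = 0) :
    ((-3 / 2 : k) • r ^ 2) ^ 2 = 0 ∧ r * ((-3 / 2 : k) • r ^ 2) = 0 ∧
      2 * ((-3 / 2 : k) • r ^ 2) + 3 * r ^ 2 = 0 := by
  refine ⟨?_, ?_, ?_⟩
  · rw [smul_pow, ← pow_mul, pow_eq_zero_of_le (by norm_num) hr, smul_zero]
  · rw [mul_smul_comm, ← pow_succ', hr, smul_zero]
  · have hc : algebraMap k B (2 * (-3 / 2) + 3) = 0 := by
      rw [show (2 : k) * (-3 / 2) + 3 = 0 by field_simp; ring, map_zero]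
    rw [map_add, map_mul, map_ofNat, map_ofNat] at hc
    rw [Algebra.smul_def]
    linear_combination r ^ 2 * hc

section Chart

variable {k : Type} [Field k]

noncomputable def chartIdeal (k : Type) [Field k] : Ideal (MvPolynomial (Fin 2) k) :=
  Ideal.span {X 1 ^ 2, X 0 * X 1, 2 * X 1 + 3 * X 0 ^ 2}

local notation "y" => Ideal.Quotient.mk (chartIdeal k) (X 0)
local notation "z" => Ideal.Quotient.mk (chartIdeal k) (X 1)

theorem chartIdeal_relations :
    z ^ 2 = 0 ∧ y * z = 0 ∧ 2 * 1 * z + 3 * y ^ 2 = 0 := by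
  simp only [mul_one, ← map_pow, ← map_mul, ← map_ofNat (Ideal.Quotient.mk (chartIdeal k)),
    ← map_add, Ideal.Quotient.eq_zero_iff_mem]
  exact ⟨Ideal.subset_span (by simp), Ideal.subset_span (by simp), Ideal.subset_span (by simp)⟩

theorem isUnit_mk_chartIdeal (h3 : (3 : k) ≠ 0) {s : MvPolynomial (Fin 2) k}
    (hs : eval ![0, 0] s ≠ 0) : IsUnit (Ideal.Quotient.mk (chartIdeal k) s) := by
  obtain ⟨hz, hyz, hrel⟩ := chartIdeal_relations (k := k)
  refine isUnit_map_of_isUnit_constantCoeff _ (fun i => ?_) ?_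
  · fin_cases i
    · exact ⟨3, pow_three_eq_zero_of_nodal h3 hyz hrel⟩
    · exact ⟨2, hz⟩
  · have hzero : (![0, 0] : Fin 2 → k) = 0 := by
      ext i
      fin_cases i <;> rfl
    rw [hzero, eval_zero] at hs
    exact isUnit_iff_ne_zero.mpr hs

theorem finrank_quotient_chartIdeal (h2 : (2 : k) ≠ 0) (h3 : (3 : k) ≠ 0) :
    Module.finrank k (MvPolynomial (Fin 2) k ⧸ chartIdeal k) = 3 := by
  obtain ⟨hz, hyz, hrel⟩ := chartIdeal_relations (k := k)
  have hspan :
      Submodule.span k (Set.range fun i : Fin 3 => 1 ^ (2 - (i : ℕ)) * y ^ (i : ℕ)) = ⊤ := by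
    refine eq_top_iff.mpr ?_
    rintro q -
    obtain ⟨p, rfl⟩ := Ideal.Quotient.mk_surjective q
    induction p using MvPolynomial.induction_on' with
    | monomial d a =>
      have hd := pow_mul_pow_mul_pow_mem_span h2 h3 hz hyz hrel (a := 2) (b := d 0) (e := d 1)
        (n := 2 + d 0 + d 1) rfl (by omega)
      have hmono : monomial d a = a • (X 0 ^ d 0 * X 1 ^ d 1 : MvPolynomial (Fin 2) k) := by
        rw [smul_eq_C_mul, monomial_eq, Finsupp.prod_fintype _ _ (by simp), Fin.prod_univ_two]
      rw [hmono, ← Ideal.Quotient.mkₐ_eq_mk k (chartIdeal k), map_smul,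
        Ideal.Quotient.mkₐ_eq_mk]
      exact Submodule.smul_mem _ a (by simpa using hd)
    | add p q hp hq => exact (map_add (Ideal.Quotient.mk (chartIdeal k)) p q) ▸ add_mem hp hq
  obtain ⟨hrz, hryz, hrrel⟩ :=
    nodal_relations_of_pow_three_eq_zero h2 (AdjoinRoot.root_X_pow_pow_self (k := k) 3)
  set r := AdjoinRoot.root (Polynomial.X ^ 3 : Polynomial k)
  let f : MvPolynomial (Fin 2) k →ₐ[k] AdjoinRoot (Polynomial.X ^ 3 : Polynomial k) :=
    aeval ![r, (-3 / 2 : k) • r ^ 2]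
  have hker : chartIdeal k ≤ RingHom.ker f := by
    simp only [chartIdeal, Ideal.span_le, Set.insert_subset_iff, Set.singleton_subset_iff,
      SetLike.mem_coe, RingHom.mem_ker, map_pow, map_mul, map_add, map_ofNat, f, aeval_X,
      Matrix.cons_val_zero, Matrix.cons_val_one]
    exact ⟨hrz, hryz, hrrel⟩
  let F := Ideal.Quotient.liftₐ (chartIdeal k) f fun _ ha => hker ha
  rw [← finrank_top, ← hspan]
  exact finrank_span_pow_mul_pow 3 F (map_one F) (show f (X 0) = r by simp [f]) 2

theorem localDim_chartIdeal (h2 : (2 : k) ≠ 0) (h3 : (3 : k) ≠ 0) :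
    localDim (chartIdeal k) 0 0 = 3 := by
  rw [localDim_eq_finrank_quotient _ _ _ fun s hs => isUnit_mk_chartIdeal h3 hs,
    finrank_quotient_chartIdeal h2 h3]

end Chart

section Projective

variable {k : Type} [Field k]

noncomputable def bourbakiIdeal (k : Type) [Field k] : Ideal (MvPolynomial (Fin 3) k) :=
  Ideal.span {2 * X 2 ^ 2, X 1 * X 2, 2 * X 0 * X 2 + 3 * X 1 ^ 2}

local notation "x" => Ideal.Quotient.mk (bourbakiIdeal k) (X 0)
local notation "y" => Ideal.Quotient.mk (bourbakiIdeal k) (X 1)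
local notation "z" => Ideal.Quotient.mk (bourbakiIdeal k) (X 2)

theorem bourbakiIdeal_relations (h2 : (2 : k) ≠ 0) :
    z ^ 2 = 0 ∧ y * z = 0 ∧ 2 * x * z + 3 * y ^ 2 = 0 := by
  simp only [← map_pow, ← map_mul, ← map_ofNat (Ideal.Quotient.mk (bourbakiIdeal k)),
    ← map_add, Ideal.Quotient.eq_zero_iff_mem]
  refine ⟨?_, Ideal.subset_span (by simp), Ideal.subset_span (by simp)⟩
  have h : (2 : k) • (X 2 ^ 2 : MvPolynomial (Fin 3) k) ∈ bourbakiIdeal k := by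
    rw [smul_eq_C_mul, map_ofNat]
    exact Ideal.subset_span (by simp)
  simpa [h2] using (bourbakiIdeal k).smul_of_tower_mem (2 : k)⁻¹ h

theorem eval_eq_zero_on_bourbakiIdeal_iff (h2 : (2 : k) ≠ 0) (h3 : (3 : k) ≠ 0)
    (p : Fin 3 → k) : (∀ f ∈ bourbakiIdeal k, eval p f = 0) ↔ p 1 = 0 ∧ p 2 = 0 := by
  constructor
  · intro hp
    have hz := hp _ (Ideal.subset_span (by simp) : 2 * X 2 ^ 2 ∈ bourbakiIdeal k)
    have hrel :=
      hp _ (Ideal.subset_span (by simp) : 2 * X 0 * X 2 + 3 * X 1 ^ 2 ∈ bourbakiIdeal k)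
    simp only [map_mul, map_add, map_pow, map_ofNat, eval_X] at hz hrel
    have hp2 : p 2 = 0 := by simpa [h2] using hz
    exact ⟨by simpa [hp2, h3] using hrel, hp2⟩
  · rintro ⟨hp1, hp2⟩ f hf
    have hker : bourbakiIdeal k ≤ RingHom.ker (eval p) :=
      Ideal.span_le.mpr (by simp [Set.insert_subset_iff, hp1, hp2])
    exact hker hf

theorem gradedPiece_bourbakiIdeal_eq_span (h2 : (2 : k) ≠ 0) (h3 : (3 : k) ≠ 0) {n : ℕ}
    (hn : 2 ≤ n) :
    gradedPiece (bourbakiIdeal k) n =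
      Submodule.span k (Set.range fun i : Fin 3 => x ^ (n - i) * y ^ (i : ℕ)) := by
  obtain ⟨hz, hyz, hrel⟩ := bourbakiIdeal_relations h2
  apply le_antisymm
  · rw [gradedPiece, homogeneousSubmodule_eq_span_monomial, Submodule.map_span, Submodule.span_le]
    rintro _ ⟨_, ⟨d, hd, rfl⟩, rfl⟩
    have hdeg : d 0 + d 1 + d 2 = n := by
      simpa [Finsupp.degree_eq_sum, Fin.sum_univ_three] using hd
    simpa [monomial_eq, Finsupp.prod_fintype, Fin.prod_univ_three] using
      pow_mul_pow_mul_pow_mem_span h2 h3 hz hyz hrel hdeg hn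
  · rw [Submodule.span_le]
    rintro _ ⟨i, rfl⟩
    refine ⟨X 0 ^ (n - i) * X 1 ^ (i : ℕ), ?_, by simp⟩
    have hhom := ((isHomogeneous_X k (0 : Fin 3)).pow (n - i)).mul
      ((isHomogeneous_X k (1 : Fin 3)).pow (i : ℕ))
    rwa [show 1 * (n - i) + 1 * (i : ℕ) = n by omega] at hhom

theorem finrank_gradedPiece_bourbakiIdeal (h2 : (2 : k) ≠ 0) (h3 : (3 : k) ≠ 0) {n : ℕ}
    (hn : 2 ≤ n) : Module.finrank k (gradedPiece (bourbakiIdeal k) n) = 3 := by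
  obtain ⟨hrz, hryz, hrrel⟩ :=
    nodal_relations_of_pow_three_eq_zero h2 (AdjoinRoot.root_X_pow_pow_self (k := k) 3)
  set r := AdjoinRoot.root (Polynomial.X ^ 3 : Polynomial k)
  let f : MvPolynomial (Fin 3) k →ₐ[k] AdjoinRoot (Polynomial.X ^ 3 : Polynomial k) :=
    aeval ![1, r, (-3 / 2 : k) • r ^ 2]
  have hker : bourbakiIdeal k ≤ RingHom.ker f := by
    simp only [bourbakiIdeal, Ideal.span_le, Set.insert_subset_iff, Set.singleton_subset_iff,
      SetLike.mem_coe, RingHom.mem_ker, map_pow, map_mul, map_add, map_ofNat, f, aeval_X,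
      Matrix.cons_val, mul_one]
    exact ⟨by rw [hrz, mul_zero], hryz, hrrel⟩
  let F := Ideal.Quotient.liftₐ (bourbakiIdeal k) f fun _ ha => hker ha
  rw [gradedPiece_bourbakiIdeal_eq_span h2 h3 hn]
  exact finrank_span_pow_mul_pow 3 F (show f (X 0) = 1 by simp [f])
    (show f (X 1) = r by simp [f]) n

end Projective

theorem eq_zero_and_eq_zero_iff_exists_smul {k : Type} [Field k] {p : Fin 3 → k}
    (hp : p ≠ 0) :
    (p 1 = 0 ∧ p 2 = 0) ↔ ∃ c : k, c ≠ 0 ∧ p = c • ![1, 0, 0] := by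
  constructor
  · rintro ⟨hp1, hp2⟩
    refine ⟨p 0, fun hp0 => hp ?_, ?_⟩ <;> ext i <;> fin_cases i <;> simp [*]
  · rintro ⟨c, -, rfl⟩
    simp

/-- Let `I = ⟨2z², yz, 2xz + 3y²⟩ ⊆ k[x,y,z]` (the Bourbaki ideal of the
nodal cubic `y²z - x³ - x²z`), with `char k ≠ 2, 3`.  Then `V(I) = {(1:0:0)}`, the local
dimension in the chart `x = 1` is
`dim_k (k[y,z]/⟨z², yz, 2z + 3y²⟩)_{⟨y,z⟩} = 3` (here `y = X 0`, `z = X 1`), and consequently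
`deg(R/I) = 3`. -/
theorem statement_13 {k : Type} [Field k] (h2 : (2 : k) ≠ 0) (h3 : (3 : k) ≠ 0)
    (I : Ideal (MvPolynomial (Fin 3) k))
    (hI : I = Ideal.span {2 * X 2 ^ 2, X 1 * X 2,
      2 * X 0 * X 2 + 3 * (X 1 : MvPolynomial (Fin 3) k) ^ 2}) :
    (∀ p : Fin 3 → k, p ≠ 0 →
       ((∀ f ∈ I, eval p f = 0) ↔ ∃ c : k, c ≠ 0 ∧ p = c • ![1, 0, 0])) ∧
    localDim (Ideal.span {(X 1 : MvPolynomial (Fin 2) k) ^ 2, X 0 * X 1,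
      2 * X 1 + 3 * (X 0 : MvPolynomial (Fin 2) k) ^ 2}) 0 0 = 3 ∧
    (∃ N : ℕ, ∀ n ≥ N, Module.finrank k (gradedPiece I n) = 3) := by
  subst hI
  refine ⟨fun p hp => ?_, localDim_chartIdeal h2 h3,
    ⟨2, fun n hn => finrank_gradedPiece_bourbakiIdeal h2 h3 hn⟩⟩
  exact (eval_eq_zero_on_bourbakiIdeal_iff h2 h3 p).trans
    (eq_zero_and_eq_zero_iff_exists_smul hp)
end

section
/- Let F = x^{2a+1} + x^a y^{a+1} + y^{2a} z with a ≥ 2, over a field k of characteristic 0. Then θ_1 = (0, -y^a, (a+1)x^a + 2a y^{a-1} z) and θ_2 = (-(a+1)² y^a, (a+1)(2a+1) x^a - 2a(2a+1) y^{a-1} z, a(a+1)² x^{a-1} y + 4a²(2a+1) y^{a-2} z²) are syzygies of the Jacobian ideal J_F, i.e., θ_i · (F_x, F_y, F_z) = 0 for i = 1, 2. -/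
open MvPolynomial

section Syzygies

variable {R : Type*} [CommRing R] (c x y z : R)

theorem syzygy_theta₁ (a : ℕ) :
    -(y ^ a) * ((c + 1) * x ^ a * y ^ a + 2 * c * y ^ (2 * a - 1) * z) +
      ((c + 1) * x ^ a + 2 * c * y ^ (a - 1) * z) * y ^ (2 * a) = 0 := by
  rcases a with _ | n
  -- at `a = 0` the truncated exponents `2 * a - 1` and `a - 1` are both `0`
  · simp only [pow_zero, Nat.mul_zero, Nat.zero_sub]
    ring
  · rw [show 2 * (n + 1) - 1 = 2 * n + 1 by omega, Nat.add_sub_cancel]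
    ring

theorem syzygy_theta₂ {a : ℕ} (ha : 2 ≤ a) :
    -((c + 1) ^ 2 * y ^ a) * ((2 * c + 1) * x ^ (2 * a) + c * x ^ (a - 1) * y ^ (a + 1)) +
      ((c + 1) * (2 * c + 1) * x ^ a - 2 * c * (2 * c + 1) * y ^ (a - 1) * z) *
        ((c + 1) * x ^ a * y ^ a + 2 * c * y ^ (2 * a - 1) * z) +
      (c * (c + 1) ^ 2 * x ^ (a - 1) * y + 4 * c ^ 2 * (2 * c + 1) * y ^ (a - 2) * z ^ 2) *
        y ^ (2 * a) = 0 := by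
  obtain ⟨n, rfl⟩ : ∃ n, a = n + 2 := ⟨a - 2, by omega⟩
  rw [show 2 * (n + 2) - 1 = 2 * n + 3 by omega, show n + 2 - 1 = n + 1 from rfl,
    Nat.add_sub_cancel]
  ring

end Syzygies

theorem statement_16_general {k : Type} [Field k] (a : ℕ) (ha : 2 ≤ a) :
    let x : MvPolynomial (Fin 3) k := X 0
    let y : MvPolynomial (Fin 3) k := X 1
    let z : MvPolynomial (Fin 3) k := X 2
    let A : MvPolynomial (Fin 3) k := (a : MvPolynomial (Fin 3) k)
    let Fx := (2 * A + 1) * x ^ (2 * a) + A * x ^ (a - 1) * y ^ (a + 1)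
    let Fy := (A + 1) * x ^ a * y ^ a + 2 * A * y ^ (2 * a - 1) * z
    let Fz := y ^ (2 * a)
    (0 * Fx + (-(y ^ a)) * Fy + ((A + 1) * x ^ a + 2 * A * y ^ (a - 1) * z) * Fz = 0) ∧
    ((-((A + 1) ^ 2 * y ^ a)) * Fx +
      ((A + 1) * (2 * A + 1) * x ^ a - 2 * A * (2 * A + 1) * y ^ (a - 1) * z) * Fy +
      (A * (A + 1) ^ 2 * x ^ (a - 1) * y + 4 * A ^ 2 * (2 * A + 1) * y ^ (a - 2) * z ^ 2) * Fz
        = 0) := by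
  intro x y z A Fx Fy Fz
  refine ⟨?_, syzygy_theta₂ A x y z ha⟩
  rw [zero_mul, zero_add]
  exact syzygy_theta₁ A x y z a

/-- Let `F = x^{2a+1} + xᵃ y^{a+1} + y^{2a} z` with `a ≥ 2` over a field of
characteristic `0`, with partials `F_x = (2a+1)x^{2a} + a x^{a-1} y^{a+1}`,
`F_y = (a+1)xᵃ yᵃ + 2a y^{2a-1} z`, `F_z = y^{2a}`.  Then
`θ₁ = (0, -yᵃ, (a+1)xᵃ + 2a y^{a-1} z)` and
`θ₂ = (-(a+1)² yᵃ, (a+1)(2a+1) xᵃ - 2a(2a+1) y^{a-1} z, a(a+1)² x^{a-1} y + 4a²(2a+1) y^{a-2} z²)`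
are syzygies of the Jacobian ideal: `θᵢ · (F_x, F_y, F_z) = 0` for `i = 1, 2`.
(Here `x = X 0`, `y = X 1`, `z = X 2`.) -/
theorem statement_16 {k : Type} [Field k] [CharZero k] (a : ℕ) (ha : 2 ≤ a) :
    let x : MvPolynomial (Fin 3) k := X 0
    let y : MvPolynomial (Fin 3) k := X 1
    let z : MvPolynomial (Fin 3) k := X 2
    let A : MvPolynomial (Fin 3) k := (a : MvPolynomial (Fin 3) k)
    let Fx := (2 * A + 1) * x ^ (2 * a) + A * x ^ (a - 1) * y ^ (a + 1)
    let Fy := (A + 1) * x ^ a * y ^ a + 2 * A * y ^ (2 * a - 1) * z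
    let Fz := y ^ (2 * a)
    (0 * Fx + (-(y ^ a)) * Fy + ((A + 1) * x ^ a + 2 * A * y ^ (a - 1) * z) * Fz = 0) ∧
    ((-((A + 1) ^ 2 * y ^ a)) * Fx +
      ((A + 1) * (2 * A + 1) * x ^ a - 2 * A * (2 * A + 1) * y ^ (a - 1) * z) * Fy +
      (A * (A + 1) ^ 2 * x ^ (a - 1) * y + 4 * A ^ 2 * (2 * A + 1) * y ^ (a - 2) * z ^ 2) * Fz
        = 0) :=
  statement_16_general a ha
end

section
/- Let F = x^{2a+1} + x^a y^{a+1} + y^{2a} z, a ≥ 2, char(k) = 0, with θ_1, θ_2 as above. The determinant of the 3×3 matrix with rows θ_1, θ_2, (x, y, z) is a nonzero constant multiple of F; hence (by Saito's criterion) F is a free curve. -/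
open MvPolynomial

theorem det_syzygy_matrix_eq_neg_mul {R : Type*} [CommRing R] (x y z A : R) {a : ℕ} (ha : 2 ≤ a) :
    Matrix.det
      !![0, -(y ^ a), (A + 1) * x ^ a + 2 * A * y ^ (a - 1) * z;
         -((A + 1) ^ 2 * y ^ a),
           (A + 1) * (2 * A + 1) * x ^ a - 2 * A * (2 * A + 1) * y ^ (a - 1) * z,
           A * (A + 1) ^ 2 * x ^ (a - 1) * y + 4 * A ^ 2 * (2 * A + 1) * y ^ (a - 2) * z ^ 2;
         x, y, z] =
      -((A + 1) ^ 2 * (2 * A + 1)) * (x ^ (2 * a + 1) + x ^ a * y ^ (a + 1) + y ^ (2 * a) * z) := by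
  obtain ⟨n, rfl⟩ : ∃ n, a = n + 2 := ⟨a - 2, by omega⟩
  rw [Matrix.det_fin_three, show n + 2 - 1 = n + 1 by omega, Nat.add_sub_cancel]
  simp only [Matrix.of_apply, Matrix.cons_val', Matrix.cons_val_zero, Matrix.cons_val_one,
    Matrix.cons_val_two, Matrix.head_cons, Matrix.tail_cons, Matrix.empty_val',
    Matrix.cons_val_fin_one, Matrix.head_fin_const]
  ring

/-- Let `F = x^{2a+1} + xᵃ y^{a+1} + y^{2a} z`, `a ≥ 2`, `char k = 0`, with
`θ₁ = (0, -yᵃ, (a+1)xᵃ + 2a y^{a-1} z)` and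
`θ₂ = (-(a+1)² yᵃ, (a+1)(2a+1) xᵃ - 2a(2a+1) y^{a-1} z, a(a+1)² x^{a-1} y + 4a²(2a+1) y^{a-2} z²)`.
The determinant of the `3×3` matrix with rows `θ₁`, `θ₂`, `(x,y,z)` is a nonzero constant
multiple of `F` (hence, by Saito's criterion, `F` is a free curve).
(Here `x = X 0`, `y = X 1`, `z = X 2`.) -/
theorem statement_17 {k : Type} [Field k] [CharZero k] (a : ℕ) (ha : 2 ≤ a) :
    let x : MvPolynomial (Fin 3) k := X 0
    let y : MvPolynomial (Fin 3) k := X 1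
    let z : MvPolynomial (Fin 3) k := X 2
    let A : MvPolynomial (Fin 3) k := (a : MvPolynomial (Fin 3) k)
    let F := x ^ (2 * a + 1) + x ^ a * y ^ (a + 1) + y ^ (2 * a) * z
    ∃ c : k, c ≠ 0 ∧
      Matrix.det
        !![0, -(y ^ a), (A + 1) * x ^ a + 2 * A * y ^ (a - 1) * z;
           -((A + 1) ^ 2 * y ^ a),
             (A + 1) * (2 * A + 1) * x ^ a - 2 * A * (2 * A + 1) * y ^ (a - 1) * z,
             A * (A + 1) ^ 2 * x ^ (a - 1) * y + 4 * A ^ 2 * (2 * A + 1) * y ^ (a - 2) * z ^ 2;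
           x, y, z] = C c * F := by
  intro x y z A F
  refine ⟨-(((a + 1) ^ 2 * (2 * a + 1) : ℕ) : k), ?_, ?_⟩
  · exact neg_ne_zero.mpr (Nat.cast_ne_zero.mpr (by positivity))
  · rw [det_syzygy_matrix_eq_neg_mul x y z A ha, map_neg, map_natCast]
    push_cast
    rfl
end
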